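/- arXiv:1108.2063 — 6 statements merged into one kernel-verified Lean document; each statement's English description precedes it below -/
import Mathlib

section
/- Let P ⊆ ℝ² be a finite set and let V be a V-shape covering P with width(V) > 0. If P is entirely contained in one of the two strips of V (i.e., P ⊆ S₁(V) or P ⊆ S₂(V)), then V does not have minimum width: there exists a V-shape V' covering P with width(V') < width(V). -/
open Set Metric

noncomputable section

/-- Points of the plane. -/
abbrev Pt : Type := EuclideanSpace ℝ (Fin 2)

/-- The real inner product of two vectors of the plane. -/
def iprod (p q : Pt) : ℝ := inner ℝ p q

/-- The ray emanating from `p` in direction `u`. -/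
def ray (p u : Pt) : Set Pt := {q | ∃ t : ℝ, 0 ≤ t ∧ q = p + t • u}

/-- The line through `p` with direction `u`. -/
def lineThrough (p u : Pt) : Set Pt := {q | ∃ t : ℝ, q = p + t • u}

/-- A V-shape: two vertices `x ≠ y` and two nonzero direction vectors `u₁, u₂` lying in
opposite closed half-planes determined by the direction `y - x` (witnessed by a unit
normal `n` of `y - x` with `⟪u₁, n⟫ ≥ 0 ≥ ⟪u₂, n⟫`). -/
structure VShape where
  x : Pt
  y : Pt
  u₁ : Pt
  u₂ : Pt
  n : Pt
  hxy : x ≠ y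
  hu₁ : u₁ ≠ 0
  hu₂ : u₂ ≠ 0
  hn : ‖n‖ = 1
  hperp : iprod (y - x) n = 0
  hside₁ : 0 ≤ iprod u₁ n
  hside₂ : iprod u₂ n ≤ 0

namespace VShape

/-- Direction of the `i`-th arm (`i = 0, 1` standing for `1, 2`). -/
def dir (V : VShape) : Fin 2 → Pt := ![V.u₁, V.u₂]

/-- The `i`-th arm: convex hull of the two parallel rays `Xᵢ` (from `x`) and `Yᵢ` (from `y`). -/
def arm (V : VShape) (i : Fin 2) : Set Pt :=
  convexHull ℝ (ray V.x (V.dir i) ∪ ray V.y (V.dir i))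

/-- The V-shape as a subset of the plane: the union of its two arms. -/
def carrier (V : VShape) : Set Pt := V.arm 0 ∪ V.arm 1

/-- The `i`-th strip: the closed region between the parallel lines `x + ℝ•uᵢ` and `y + ℝ•uᵢ`. -/
def strip (V : VShape) (i : Fin 2) : Set Pt :=
  convexHull ℝ (lineThrough V.x (V.dir i) ∪ lineThrough V.y (V.dir i))

/-- Width of the `i`-th arm: the distance between the two parallel boundary lines. -/
def armWidth (V : VShape) (i : Fin 2) : ℝ :=
  Metric.infDist V.x (lineThrough V.y (V.dir i))

/-- Width of a V-shape: the larger of the two arm widths. -/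
def width (V : VShape) : ℝ := max (V.armWidth 0) (V.armWidth 1)

/-- A V-shape covers a set `P` if `P` is contained in it. -/
def covers (V : VShape) (P : Set Pt) : Prop := P ⊆ V.carrier

end VShape

/-- `S` is a closed strip of width `w`: the closed region between two parallel lines at
distance `w`, described by a unit normal vector `v` and an offset `c`. -/
def IsStrip (S : Set Pt) (w : ℝ) : Prop :=
  0 ≤ w ∧ ∃ (v : Pt) (c : ℝ), ‖v‖ = 1 ∧ S = {p | c ≤ iprod p v ∧ iprod p v ≤ c + w}

/-!
A set in a strip of width `w ≤ W` can be covered by a very flat V-shape whose vertices lie on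
the midline of the strip and whose arms have slope `1 / e` relative to it. If the set lies within
distance `R` of the origin, vertices `L = 2R + e w / 2` apart suffice, and the arms then have width
`L / √(e ^ 2 + 1) < L / e`, which is below `W` for `e = 4R / W`.
-/

open scoped RealInnerProductSpace

lemma iprod_self_of_norm_eq_one {b : Pt} (hb : ‖b‖ = 1) : iprod b b = 1 := by
  rw [iprod, real_inner_self_eq_norm_sq, hb, one_pow]

lemma iprod_sub_left (x y b : Pt) : iprod (x - y) b = iprod x b - iprod y b :=
  inner_sub_left x y b

lemma iprod_add_smul_of_iprod_eq_zero {z d b : Pt} (hdb : iprod d b = 0) (t : ℝ) :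
    iprod (z + t • d) b = iprod z b := by
  simp only [iprod, inner_add_left, real_inner_smul_left] at hdb ⊢
  rw [hdb, mul_zero, add_zero]

lemma isLinearMap_iprod_left (b : Pt) : IsLinearMap ℝ (fun p => iprod p b) :=
  ⟨fun p q => inner_add_left p q b, fun r p => real_inner_smul_left p b r⟩

instance : Fact (Module.finrank ℝ Pt = 2) := ⟨finrank_euclideanSpace_fin⟩

def planeOrientation : Orientation ℝ Pt (Fin 2) :=
  (EuclideanSpace.basisFun (Fin 2) ℝ).toBasis.orientation

def rot90 : Pt ≃ₗᵢ[ℝ] Pt := planeOrientation.rightAngleRotation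

lemma iprod_rot90_self (b : Pt) : iprod (rot90 b) b = 0 :=
  planeOrientation.inner_rightAngleRotation_self b

lemma norm_rot90 (b : Pt) : ‖rot90 b‖ = ‖b‖ := rot90.norm_map b

lemma exists_norm_eq_one_iprod_eq_zero {d : Pt} (hd : d ≠ 0) :
    ∃ b : Pt, ‖b‖ = 1 ∧ iprod d b = 0 := by
  refine ⟨‖d‖⁻¹ • rot90 d, ?_, ?_⟩
  · rw [norm_smul, norm_inv, norm_norm, norm_rot90, inv_mul_cancel₀ (norm_ne_zero_iff.2 hd)]
  · rw [iprod, real_inner_smul_right, real_inner_comm, ← iprod, iprod_rot90_self, mul_zero]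

lemma eq_iprod_rot90_smul_add_iprod_smul {b : Pt} (hb : ‖b‖ = 1) (z : Pt) :
    z = iprod z (rot90 b) • rot90 b + iprod z b • b := by
  refine ext_inner_right ℝ fun y => ?_
  have h := planeOrientation.inner_mul_inner_add_areaForm_mul_areaForm b z y
  rw [iprod, iprod, real_inner_comm (rot90 b) z, real_inner_comm b z]
  simp only [rot90, inner_add_left, real_inner_smul_left,
    planeOrientation.inner_rightAngleRotation_left, hb] at h ⊢
  linarith

lemma iprod_smul_rot90_add_smul {b : Pt} (hb : ‖b‖ = 1) (α β γ δ : ℝ) :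
    iprod (α • rot90 b + β • b) (γ • rot90 b + δ • b) = α * γ + β * δ := by
  have hab : ⟪rot90 b, b⟫ = 0 := iprod_rot90_self b
  have hba : ⟪b, rot90 b⟫ = 0 := by rw [real_inner_comm, hab]
  have haa : ⟪rot90 b, rot90 b⟫ = 1 := iprod_self_of_norm_eq_one ((norm_rot90 b).trans hb)
  have hbb : ⟪b, b⟫ = 1 := iprod_self_of_norm_eq_one hb
  simp only [iprod, inner_add_left, inner_add_right, real_inner_smul_left,
    real_inner_smul_right, hab, hba, haa, hbb]
  ring

lemma iprod_smul_rot90_add_smul_rot90 {b : Pt} (hb : ‖b‖ = 1) (α β : ℝ) :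
    iprod (α • rot90 b + β • b) (rot90 b) = α := by
  simpa using iprod_smul_rot90_add_smul hb α β 1 0

lemma iprod_smul_rot90_add_smul_right {b : Pt} (hb : ‖b‖ = 1) (α β : ℝ) :
    iprod (α • rot90 b + β • b) b = β := by
  simpa using iprod_smul_rot90_add_smul hb α β 0 1

lemma norm_smul_rot90_add_smul_sq {b : Pt} (hb : ‖b‖ = 1) (α β : ℝ) :
    ‖α • rot90 b + β • b‖ ^ 2 = α ^ 2 + β ^ 2 := by
  rw [← real_inner_self_eq_norm_sq, ← iprod, iprod_smul_rot90_add_smul hb]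
  ring

lemma smul_rot90_add_smul_ne_zero {b : Pt} (hb : ‖b‖ = 1) (α : ℝ) {β : ℝ}
    (hβ : β ≠ 0) :
    α • rot90 b + β • b ≠ 0 := fun h => hβ <| by
  simpa [h, iprod] using (iprod_smul_rot90_add_smul_right hb α β).symm

lemma abs_iprod_sub_le_infDist_lineThrough {x y d b : Pt} (hb : ‖b‖ = 1)
    (hdb : iprod d b = 0) : |iprod (x - y) b| ≤ infDist x (lineThrough y d) := by
  refine (le_infDist (⟨y, 0, by simp⟩ : (lineThrough y d).Nonempty)).2 ?_
  rintro _ ⟨t, rfl⟩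
  calc |iprod (x - y) b| = |iprod (x - (y + t • d)) b| := by
        rw [iprod_sub_left, iprod_sub_left, iprod_add_smul_of_iprod_eq_zero hdb]
    _ ≤ ‖x - (y + t • d)‖ * ‖b‖ := abs_real_inner_le_norm _ _
    _ = dist x (y + t • d) := by rw [hb, mul_one, dist_eq_norm]

lemma infDist_lineThrough_sq_le (p q u : Pt) :
    infDist p (lineThrough q u) ^ 2 ≤ ‖p - q‖ ^ 2 - iprod (p - q) u ^ 2 / ‖u‖ ^ 2 := by
  set t := iprod (p - q) u / ‖u‖ ^ 2
  have hdist : infDist p (lineThrough q u) ≤ dist p (q + t • u) :=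
    infDist_le_dist_of_mem ⟨t, rfl⟩
  have hsq : dist p (q + t • u) ^ 2 = ‖p - q‖ ^ 2 - iprod (p - q) u ^ 2 / ‖u‖ ^ 2 := by
    rw [dist_eq_norm, ← sub_sub, norm_sub_sq_real, norm_smul, real_inner_smul_right,
      Real.norm_eq_abs, mul_pow, sq_abs]
    simp only [t, iprod]
    rcases eq_or_ne ‖u‖ 0 with hu | hu
    · simp [hu]
    · field_simp
      ring
  rw [← hsq]
  exact pow_le_pow_left₀ infDist_nonneg hdist 2

lemma infDist_lineThrough_smul_rot90_add_smul_sq_le {b : Pt} (hb : ‖b‖ = 1) (x : Pt)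
    {L e s : ℝ} (hs : s ^ 2 = 1) :
    infDist x (lineThrough (x + L • rot90 b) (e • rot90 b + s • b)) ^ 2
      ≤ L ^ 2 / (e ^ 2 + 1) := by
  have hxy : x - (x + L • rot90 b) = (-L) • rot90 b + (0 : ℝ) • b := by module
  have h := infDist_lineThrough_sq_le x (x + L • rot90 b) (e • rot90 b + s • b)
  rw [hxy, norm_smul_rot90_add_smul_sq hb, norm_smul_rot90_add_smul_sq hb,
    iprod_smul_rot90_add_smul hb, hs] at h
  refine h.trans_eq ?_
  field_simp
  ring

lemma convexHull_lineThrough_union_subset {x y d b : Pt} (hdb : iprod d b = 0) :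
    convexHull ℝ (lineThrough x d ∪ lineThrough y d) ⊆
      {p | min (iprod x b) (iprod y b) ≤ iprod p b ∧
        iprod p b ≤ min (iprod x b) (iprod y b) + |iprod (x - y) b|} := by
  have hmax : min (iprod x b) (iprod y b) + |iprod (x - y) b| = max (iprod x b) (iprod y b) := by
    rw [iprod_sub_left, ← max_sub_min_eq_abs']
    ring
  rw [hmax]
  refine convexHull_min ?_ <|
    (convex_halfSpace_ge (isLinearMap_iprod_left b) _).inter
      (convex_halfSpace_le (isLinearMap_iprod_left b) _)
  rintro _ (⟨t, rfl⟩ | ⟨t, rfl⟩) <;>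
    simp only [mem_ofPred_eq, iprod_add_smul_of_iprod_eq_zero hdb]
  · exact ⟨min_le_left _ _, le_max_left _ _⟩
  · exact ⟨min_le_right _ _, le_max_right _ _⟩

lemma add_smul_sub_add_smul_mem_convexHull_ray_union {x y u : Pt} {s t : ℝ}
    (hs₀ : 0 ≤ s) (hs₁ : s ≤ 1) (ht : 0 ≤ t) :
    x + s • (y - x) + t • u ∈ convexHull ℝ (ray x u ∪ ray y u) := by
  have hx : x + t • u ∈ convexHull ℝ (ray x u ∪ ray y u) :=
    subset_convexHull ℝ _ (Or.inl ⟨t, ht, rfl⟩)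
  have hy : y + t • u ∈ convexHull ℝ (ray x u ∪ ray y u) :=
    subset_convexHull ℝ _ (Or.inr ⟨t, ht, rfl⟩)
  convert (convex_convexHull ℝ _) hx hy (sub_nonneg.2 hs₁) hs₀ (by ring) using 1
  module


namespace VShape

lemma dir_ne_zero (V : VShape) (i : Fin 2) : V.dir i ≠ 0 := by
  fin_cases i
  exacts [V.hu₁, V.hu₂]

lemma armWidth_le_width (V : VShape) (i : Fin 2) : V.armWidth i ≤ V.width := by
  fin_cases i
  exacts [le_max_left _ _, le_max_right _ _]

lemma exists_isStrip_superset_strip (V : VShape) (i : Fin 2) :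
    ∃ S w, IsStrip S w ∧ w ≤ V.armWidth i ∧ V.strip i ⊆ S := by
  obtain ⟨b, hb, hdb⟩ := exists_norm_eq_one_iprod_eq_zero (V.dir_ne_zero i)
  exact ⟨_, _, ⟨abs_nonneg _, b, _, hb, rfl⟩, abs_iprod_sub_le_infDist_lineThrough hb hdb,
    convexHull_lineThrough_union_subset hdb⟩

end VShape

/-- For large `e` a thin wedge opening along `rot90 b`; both arms have width
`L / √(e ^ 2 + 1)`. -/
def flatVShape (x b : Pt) (L e : ℝ) (hb : ‖b‖ = 1) (hL : 0 < L) : VShape where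
  x := x
  y := x + L • rot90 b
  u₁ := e • rot90 b + (1 : ℝ) • b
  u₂ := e • rot90 b + (-1 : ℝ) • b
  n := b
  hxy h := by
    have hb₀ : b ≠ 0 := norm_ne_zero_iff.1 (hb ▸ one_ne_zero)
    exact smul_ne_zero hL.ne' (rot90.map_ne_zero_iff.2 hb₀) (by simpa using h.symm)
  hu₁ := smul_rot90_add_smul_ne_zero hb e one_ne_zero
  hu₂ := smul_rot90_add_smul_ne_zero hb e (by norm_num)
  hn := hb
  hperp := by
    rw [add_sub_cancel_left, iprod, real_inner_smul_left, ← iprod, iprod_rot90_self, mul_zero]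
  hside₁ := by rw [iprod_smul_rot90_add_smul_right hb]; exact zero_le_one
  hside₂ := by rw [iprod_smul_rot90_add_smul_right hb]; norm_num

lemma width_flatVShape_lt {x b : Pt} {L e W : ℝ} (hb : ‖b‖ = 1) (hL : 0 < L) (hW : 0 < W)
    (hLe : L ≤ W * e) : (flatVShape x b L e hb hL).width < W := by
  have harm (s : ℝ) (hs : s ^ 2 = 1) :
      infDist x (lineThrough (x + L • rot90 b) (e • rot90 b + s • b)) < W := by
    refine lt_of_pow_lt_pow_left₀ 2 hW.le <|
      (infDist_lineThrough_smul_rot90_add_smul_sq_le hb x hs).trans_lt ?_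
    rw [div_lt_iff₀ (by positivity)]
    nlinarith
  exact max_lt (harm 1 (one_pow 2)) (harm (-1) (by norm_num))

lemma mem_carrier_flatVShape {x b p : Pt} {L e : ℝ} (hb : ‖b‖ = 1) (hL : 0 < L)
    (h₀ : e * |iprod (p - x) b| ≤ iprod (p - x) (rot90 b))
    (h₁ : iprod (p - x) (rot90 b) ≤ L + e * |iprod (p - x) b|) :
    p ∈ (flatVShape x b L e hb hL).carrier := by
  set α := iprod (p - x) (rot90 b)
  set β := iprod (p - x) b
  have hp : p = x + (α • rot90 b + β • b) :=
    sub_eq_iff_eq_add'.1 (eq_iprod_rot90_smul_add_iprod_smul hb (p - x))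
  have hmem (σ : ℝ) (hσβ : σ * β = |β|) (hσ : σ ^ 2 = 1) :
      p ∈ convexHull ℝ (ray x (e • rot90 b + σ • b) ∪
        ray (x + L • rot90 b) (e • rot90 b + σ • b)) := by
    have hp' : p = x + ((α - e * |β|) / L) • (x + L • rot90 b - x)
        + |β| • (e • rot90 b + σ • b) := by
      rw [hp, add_sub_cancel_left, smul_smul, div_mul_cancel₀ _ hL.ne', ← hσβ]
      match_scalars
      · ring
      · ring
      · linear_combination -β * hσ
    rw [hp']
    exact add_smul_sub_add_smul_mem_convexHull_ray_union (div_nonneg (by linarith) hL.le)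
      ((div_le_one₀ hL).2 (by linarith)) (abs_nonneg β)
  rcases le_total 0 β with hβ | hβ
  · exact Or.inl (hmem 1 (by rw [one_mul, abs_of_nonneg hβ]) (one_pow 2))
  · exact Or.inr (hmem (-1) (by rw [abs_of_nonpos hβ, neg_one_mul]) (by norm_num))

theorem exists_vShape_covers_width_lt_of_subset_isStrip {P S : Set Pt} {w W : ℝ}
    (hP : Bornology.IsBounded P) (hS : IsStrip S w) (hPS : P ⊆ S) (hW : 0 < W) (hwW : w ≤ W) :
    ∃ V : VShape, V.covers P ∧ V.width < W := by
  obtain ⟨hw, b, c, hb, rfl⟩ := hS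
  obtain ⟨R, hR, hPR⟩ := hP.subset_closedBall_lt 0 0
  set e := 4 * R / W with he_def
  set L := 2 * R + e * w / 2 with hL_def
  have he : 0 < e := by positivity
  have hL : 0 < L := by positivity
  set x : Pt := (-(R + e * w / 2)) • rot90 b + (c + w / 2) • b
  refine ⟨flatVShape x b L e hb hL, fun p hp => ?_, width_flatVShape_lt hb hL hW ?_⟩
  · have hpa : |iprod p (rot90 b)| ≤ R := by
      calc |iprod p (rot90 b)| ≤ ‖p‖ * ‖rot90 b‖ := abs_real_inner_le_norm _ _
        _ ≤ R := by rw [norm_rot90, hb, mul_one, ← mem_closedBall_zero_iff]; exact hPR hp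
    have hpx : p - x = (iprod p (rot90 b) + (R + e * w / 2)) • rot90 b
        + (iprod p b - (c + w / 2)) • b := by
      conv_lhs => rw [eq_iprod_rot90_smul_add_iprod_smul hb p]
      module
    obtain ⟨hcp, hpc⟩ := hPS hp
    have hβ : e * |iprod (p - x) b| ≤ e * (w / 2) := by
      rw [hpx, iprod_smul_rot90_add_smul_right hb]
      exact mul_le_mul_of_nonneg_left (abs_le.2 ⟨by linarith, by linarith⟩) he.le
    have hα := iprod_smul_rot90_add_smul_rot90 hb (iprod p (rot90 b) + (R + e * w / 2))
      (iprod p b - (c + w / 2))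
    rw [← hpx] at hα
    obtain ⟨hpa₀, hpa₁⟩ := abs_le.1 hpa
    exact mem_carrier_flatVShape hb hL (by linarith)
      (by linarith [abs_nonneg (iprod (p - x) b), mul_nonneg he.le (abs_nonneg (iprod (p - x) b))])
  · have hWe : W * e = 4 * R := by rw [he_def]; field_simp
    have hew : e * w ≤ e * W := mul_le_mul_of_nonneg_left hwW he.le
    linarith

theorem statement0_general (P : Set Pt) (hPfin : P.Finite) (V : VShape)
    (hw : 0 < V.width)
    (hsub : P ⊆ V.strip 0 ∨ P ⊆ V.strip 1) :
    ∃ V' : VShape, V'.covers P ∧ V'.width < V.width := by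
  obtain ⟨i, hPi⟩ : ∃ i, P ⊆ V.strip i := hsub.elim (⟨0, ·⟩) (⟨1, ·⟩)
  obtain ⟨S, w, hS, hwi, hiS⟩ := V.exists_isStrip_superset_strip i
  exact exists_vShape_covers_width_lt_of_subset_isStrip hPfin.isBounded hS (hPi.trans hiS) hw
    (hwi.trans (V.armWidth_le_width i))

/-- If a positive-width V-shape `V` covers a finite set `P` and one of its two
strips already contains `P` entirely, then `V` does not have minimum width. -/
theorem statement0 (P : Set Pt) (hPfin : P.Finite) (V : VShape)
    (hcov : V.covers P) (hw : 0 < V.width)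
    (hsub : P ⊆ V.strip 0 ∨ P ⊆ V.strip 1) :
    ∃ V' : VShape, V'.covers P ∧ V'.width < V.width :=
  statement0_general P hPfin V hw hsub
end
end

section
/- Let P ⊆ ℝ² be a finite nonempty set contained in a strip of width w > 0. Then for every ε > 0 there exists a V-shape covering P whose width is at most w/2 + ε. -/
open Set Metric

noncomputable section

/-!
Put both vertices on the midline of the strip, far apart along it, and let the arms leave them
in the directions `u ± s • v`, where `u` runs along the strip and `v` is its unit normal. If
`|⟪p, u⟫| ≤ R` on the finite set `P`, a distance `L = 2 R + w / (2 s)` between the vertices is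
enough for the upper half of the strip (over `P`) to lie in the first arm and the lower half in
the second; each arm then has width at most `L s = w / 2 + 2 R s`, and `s = ε / (2 R)` finishes.
-/

open scoped RealInnerProductSpace EuclideanSpace

theorem exists_orthonormal_decomposition {E : Type*} [NormedAddCommGroup E]
    [InnerProductSpace ℝ E] [Fact (Module.finrank ℝ E = 2)] {v : E} (hv : ‖v‖ = 1) :
    ∃ u : E, ‖u‖ = 1 ∧ ⟪u, v⟫ = 0 ∧ ∀ p, p = ⟪p, u⟫ • u + ⟪p, v⟫ • v := by
  have : FiniteDimensional ℝ E := .of_fact_finrank_eq_two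
  let o : Orientation ℝ E (Fin 2) := (Module.finBasisOfFinrankEq ℝ E Fact.out).orientation
  refine ⟨o.rightAngleRotation v, by simp [hv], o.inner_rightAngleRotation_self v, fun p => ?_⟩
  refine ext_inner_right ℝ fun q => ?_
  have := o.inner_mul_inner_add_areaForm_mul_areaForm v p q
  rw [hv, ← o.inner_rightAngleRotation_left, ← o.inner_rightAngleRotation_left] at this
  rw [inner_add_left, real_inner_smul_left, real_inner_smul_left, real_inner_comm v p,
    real_inner_comm (o.rightAngleRotation v) p]
  linarith

theorem add_smul_ne_zero_of_inner_eq_zero {E : Type*} [NormedAddCommGroup E]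
    [InnerProductSpace ℝ E] {u v : E} (hu : u ≠ 0) (huv : ⟪u, v⟫ = 0) (t : ℝ) :
    u + t • v ≠ 0 := by
  intro h
  have := congrArg (⟪u, ·⟫) h
  simp only [inner_add_right, real_inner_smul_right, huv, mul_zero, add_zero, inner_zero_right,
    inner_self_eq_zero] at this
  exact hu this

namespace VShape

theorem add_smul_sub_add_smul_mem_arm (V : VShape) (i : Fin 2) {μ τ : ℝ} (hμ : μ ∈ Icc 0 1)
    (hτ : 0 ≤ τ) : V.x + μ • (V.y - V.x) + τ • V.dir i ∈ V.arm i := by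
  have hx : V.x + τ • V.dir i ∈ V.arm i := subset_convexHull ℝ _ (Or.inl ⟨τ, hτ, rfl⟩)
  have hy : V.y + τ • V.dir i ∈ V.arm i := subset_convexHull ℝ _ (Or.inr ⟨τ, hτ, rfl⟩)
  have hconv : Convex ℝ (V.arm i) := convex_convexHull ℝ _
  convert hconv.add_smul_sub_mem hx hy hμ using 1
  module

theorem armWidth_le_norm (V : VShape) (i : Fin 2) (t : ℝ) :
    V.armWidth i ≤ ‖V.x - (V.y + t • V.dir i)‖ :=
  (infDist_le_dist_of_mem (show _ ∈ lineThrough V.y (V.dir i) from ⟨t, rfl⟩)).trans_eq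
    (dist_eq_norm _ _)

variable {o u v : Pt} {L s : ℝ}

def ofFrame (o u v : Pt) (L s : ℝ) (hu : ‖u‖ = 1) (hv : ‖v‖ = 1) (huv : ⟪u, v⟫ = 0)
    (hL : 0 < L) (hs : 0 ≤ s) : VShape where
  x := o
  y := o + L • u
  u₁ := u + s • v
  u₂ := u - s • v
  n := v
  hxy := by simp [eq_comm (a := o), hL.ne', ← norm_ne_zero_iff, hu]
  hu₁ := add_smul_ne_zero_of_inner_eq_zero (norm_ne_zero_iff.mp (by simp [hu])) huv s
  hu₂ := by
    rw [sub_eq_add_neg, ← neg_smul]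
    exact add_smul_ne_zero_of_inner_eq_zero (norm_ne_zero_iff.mp (by simp [hu])) huv (-s)
  hn := hv
  hperp := by simp [iprod, real_inner_smul_left, huv]
  hside₁ := by simp [iprod, inner_add_left, real_inner_smul_left, huv, hv, hs]
  hside₂ := by simp [iprod, inner_sub_left, real_inner_smul_left, huv, hv, hs]

variable (hu : ‖u‖ = 1) (hv : ‖v‖ = 1) (huv : ⟪u, v⟫ = 0) (hL : 0 < L)

theorem ofFrame_width_le (hs : 0 ≤ s) : (ofFrame o u v L s hu hv huv hL hs).width ≤ L * s := by
  have key : ∀ σ : ℝ, |σ| = s → ‖o - (o + L • u + (-L) • (u + σ • v))‖ = L * s := by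
    intro σ hσ
    rw [show o - (o + L • u + (-L) • (u + σ • v)) = (L * σ) • v by module, norm_smul, hv,
      mul_one, Real.norm_eq_abs, abs_mul, abs_of_pos hL, hσ]
  refine max_le ((armWidth_le_norm _ 0 (-L)).trans_eq (key s (abs_of_nonneg hs)))
    ((armWidth_le_norm _ 1 (-L)).trans_eq ?_)
  show ‖o - (o + L • u + (-L) • (u - s • v))‖ = L * s
  rw [sub_eq_add_neg u, ← neg_smul]
  exact key (-s) (by rw [abs_neg, abs_of_nonneg hs])

theorem add_smul_add_smul_mem_ofFrame (hs : 0 < s) {α β : ℝ} (hβ : |β| ≤ s * α) (hα : α ≤ L) :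
    o + α • u + β • v ∈ (ofFrame o u v L s hu hv huv hL hs.le).carrier := by
  have hτ : 0 ≤ |β| / s := by positivity
  have hτα : |β| / s ≤ α := (div_le_iff₀' hs).mpr hβ
  have hμ : (α - |β| / s) / L ∈ Icc 0 1 :=
    ⟨div_nonneg (by linarith) hL.le, (div_le_one hL).mpr (by linarith)⟩
  rcases le_total 0 β with hβ0 | hβ0
  · left
    convert add_smul_sub_add_smul_mem_arm _ 0 hμ hτ using 1
    show _ = o + _ • (o + L • u - o) + _ • (u + s • v)
    rw [abs_of_nonneg hβ0]
    match_scalars <;> field_simp <;> ring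
  · right
    convert add_smul_sub_add_smul_mem_arm _ 1 hμ hτ using 1
    show _ = o + _ • (o + L • u - o) + _ • (u - s • v)
    rw [abs_of_nonpos hβ0]
    match_scalars <;> field_simp <;> ring

end VShape

theorem exists_vShape_covers_of_abs_inner_le {P : Set Pt} {u v : Pt} (hu : ‖u‖ = 1)
    (hv : ‖v‖ = 1) (huv : ⟪u, v⟫ = 0) (hspan : ∀ p, p = ⟪p, u⟫ • u + ⟪p, v⟫ • v)
    {R h w s : ℝ} (hR : 0 < R) (hw : 0 ≤ w) (hs : 0 < s)
    (hP : ∀ p ∈ P, |⟪p, u⟫| ≤ R ∧ |⟪p, v⟫ - h| ≤ w / 2) :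
    ∃ V : VShape, V.covers P ∧ V.width ≤ 2 * R * s + w / 2 := by
  have hL : 0 < 2 * R + w / (2 * s) := by positivity
  refine ⟨.ofFrame ((-(R + w / (2 * s))) • u + h • v) u v _ s hu hv huv hL hs.le,
    fun p hp => ?_, (VShape.ofFrame_width_le hu hv huv hL hs.le).trans_eq (by field_simp)⟩
  obtain ⟨ha, hb⟩ := hP p hp
  obtain ⟨ha₁, ha₂⟩ := abs_le.mp ha
  have hpo : p = (-(R + w / (2 * s))) • u + h • v + (⟪p, u⟫ + R + w / (2 * s)) • u
      + (⟪p, v⟫ - h) • v := by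
    conv_lhs => rw [hspan p]
    module
  rw [hpo]
  refine VShape.add_smul_add_smul_mem_ofFrame hu hv huv hL hs ?_ (by linarith)
  have : s * (⟪p, u⟫ + R + w / (2 * s)) = s * (⟪p, u⟫ + R) + w / 2 := by field_simp
  nlinarith

theorem statement1_general (P : Set Pt) (hPfin : P.Finite)
    (w : ℝ) (S : Set Pt) (hS : IsStrip S w) (hPS : P ⊆ S) :
    ∀ ε : ℝ, 0 < ε → ∃ V : VShape, V.covers P ∧ V.width ≤ w / 2 + ε := by
  intro ε hε
  obtain ⟨hw, v, c, hv, rfl⟩ := hS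
  obtain ⟨u, hu, huv, hspan⟩ := exists_orthonormal_decomposition hv
  obtain ⟨R, hR, hPR⟩ := hPfin.isBounded.exists_pos_norm_le
  have hP : ∀ p ∈ P, |⟪p, u⟫| ≤ R ∧ |⟪p, v⟫ - (c + w / 2)| ≤ w / 2 := by
    intro p hp
    obtain ⟨hc, hcw⟩ : c ≤ ⟪p, v⟫ ∧ ⟪p, v⟫ ≤ c + w := hPS hp
    refine ⟨?_, abs_le.mpr ⟨by linarith, by linarith⟩⟩
    calc |⟪p, u⟫| ≤ ‖p‖ * ‖u‖ := abs_real_inner_le_norm p u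
      _ ≤ R := by rw [hu, mul_one]; exact hPR p hp
  obtain ⟨V, hVP, hVw⟩ := exists_vShape_covers_of_abs_inner_le hu hv huv hspan hR hw
    (show 0 < ε / (2 * R) by positivity) hP
  exact ⟨V, hVP, hVw.trans_eq (by field_simp; ring)⟩

/-- A finite nonempty set contained in a strip of width `w > 0` can be covered,
for every `ε > 0`, by a V-shape of width at most `w/2 + ε`. -/
theorem statement1 (P : Set Pt) (hPfin : P.Finite) (hPne : P.Nonempty)
    (w : ℝ) (hw : 0 < w) (S : Set Pt) (hS : IsStrip S w) (hPS : P ⊆ S) :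
    ∀ ε : ℝ, 0 < ε → ∃ V : VShape, V.covers P ∧ V.width ≤ w / 2 + ε :=
  statement1_general P hPfin w S hS hPS
end
end

section
/- Let Q ⊆ ℝ² be a nonempty bounded set of diameter D that is contained in a strip of width t whose boundary lines have direction given by a unit vector u. Let u' be a unit vector making angle α ∈ [0, π/2] with u. Then Q is contained in a strip whose boundary lines have direction u' and whose width is at most D·sin α + t·cos α. -/
open Set Metric

noncomputable section

/-! Write `u' = cos α • u + b • v` in the orthonormal basis `(u, v)`, so that `|b| = sin α`, and
take the unit normal `v' = cos α • v - b • u` of `u'`. For `p, q ∈ Q` the difference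
`⟪p - q, v'⟫ = cos α ⟪p - q, v⟫ - b ⟪p - q, u⟫` is at most `t cos α + D sin α`, so the values of
`⟪·, v'⟫` on `Q` lie in an interval of that length. -/

open InnerProductGeometry Module
open scoped RealInnerProductSpace

section

variable {E : Type*} [NormedAddCommGroup E] [InnerProductSpace ℝ E]

theorem sq_inner_add_sq_inner_of_orthonormal (hE : finrank ℝ E = 2) {u v : E} (hu : ‖u‖ = 1)
    (hv : ‖v‖ = 1) (huv : ⟪u, v⟫ = 0) (x : E) : ⟪x, u⟫ ^ 2 + ⟪x, v⟫ ^ 2 = ‖x‖ ^ 2 := by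
  replace huv : Orthonormal ℝ ![u, v] := by simpa [hu, hv] using huv
  have hcard : Fintype.card (Fin 2) = finrank ℝ E := by simp [hE]
  have hON : Orthonormal ℝ (basisOfOrthonormalOfCardEqFinrank huv hcard) := by
    rwa [coe_basisOfOrthonormalOfCardEqFinrank]
  simpa [Fin.sum_univ_two, coe_basisOfOrthonormalOfCardEqFinrank] using
    ((basisOfOrthonormalOfCardEqFinrank huv hcard).toOrthonormalBasis hON).sum_sq_inner_left x

theorem sin_angle_eq_abs_inner_of_orthonormal (hE : finrank ℝ E = 2) {u v x : E}
    (hu : ‖u‖ = 1) (hv : ‖v‖ = 1) (huv : ⟪u, v⟫ = 0) (hx : ‖x‖ = 1) :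
    Real.sin (angle u x) = |⟪x, v⟫| := by
  have hcos : ⟪x, u⟫ = Real.cos (angle u x) := by
    rw [real_inner_comm, inner_eq_cos_angle_of_norm_eq_one hu hx]
  have hparseval := sq_inner_add_sq_inner_of_orthonormal hE hu hv huv x
  rw [← sq_eq_sq₀ (sin_angle_nonneg u x) (abs_nonneg _), sq_abs]
  rw [hcos, hx] at hparseval
  linarith [Real.sin_sq_add_cos_sq (angle u x)]

theorem norm_smul_sub_smul_eq_one {u v : E} (hu : ‖u‖ = 1) (hv : ‖v‖ = 1)
    (huv : ⟪u, v⟫ = 0) {a b : ℝ} (hab : a ^ 2 + b ^ 2 = 1) : ‖a • v - b • u‖ = 1 := by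
  have hperp : ⟪a • v, b • u⟫ = 0 := by
    rw [real_inner_smul_left, real_inner_smul_right, real_inner_comm, huv, mul_zero, mul_zero]
  rw [← sq_eq_sq₀ (norm_nonneg _) zero_le_one, sq, norm_sub_sq_eq_norm_sq_add_norm_sq_real hperp,
    norm_smul, norm_smul, hu, hv]
  simpa [← sq] using hab

theorem inner_smul_sub_smul_le {x u v : E} {a b s D : ℝ} (ha : 0 ≤ a) (hv : ⟪x, v⟫ ≤ s)
    (hu : |⟪x, u⟫| ≤ D) : ⟪x, a • v - b • u⟫ ≤ a * s + |b| * D := by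
  have hbu : -(b * ⟪x, u⟫) ≤ |b| * D :=
    (neg_le_abs _).trans <| (abs_mul b _).trans_le <| mul_le_mul_of_nonneg_left hu (abs_nonneg b)
  rw [inner_sub_right, real_inner_smul_right, real_inner_smul_right]
  nlinarith [mul_le_mul_of_nonneg_left hv ha]

end

theorem exists_forall_mem_Icc_of_sub_le {α : Type*} {s : Set α} (hs : s.Nonempty) {f : α → ℝ}
    {W : ℝ} (hW : ∀ p ∈ s, ∀ q ∈ s, f p - f q ≤ W) : ∃ c, ∀ p ∈ s, f p ∈ Icc c (c + W) := by
  obtain ⟨q₀, hq₀⟩ := hs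
  have hbdd : BddBelow (f '' s) :=
    ⟨f q₀ - W, forall_mem_image.2 fun p hp => by linarith [hW q₀ hq₀ p hp]⟩
  refine ⟨sInf (f '' s), fun p hp => ⟨csInf_le hbdd (mem_image_of_mem f hp), ?_⟩⟩
  have : f p - W ≤ sInf (f '' s) :=
    le_csInf ⟨f q₀, mem_image_of_mem f hq₀⟩ <|
      forall_mem_image.2 fun q hq => by linarith [hW p hp q hq]
  linarith

theorem statement8_general (Q : Set Pt) (hQne : Q.Nonempty) (hQbdd : Bornology.IsBounded Q)
    (D : ℝ) (hD : Metric.diam Q = D) (t : ℝ)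
    (u : Pt) (hu : ‖u‖ = 1)
    (v : Pt) (c : ℝ) (hv : ‖v‖ = 1) (huv : iprod u v = 0)
    (hQS : Q ⊆ {p | c ≤ iprod p v ∧ iprod p v ≤ c + t})
    (u' : Pt) (hu' : ‖u'‖ = 1)
    (α : ℝ) (hα : α ∈ Set.Icc 0 (Real.pi / 2))
    (hangle : InnerProductGeometry.angle u u' = α) :
    ∃ (v' : Pt) (c' : ℝ), ‖v'‖ = 1 ∧ iprod u' v' = 0 ∧
      Q ⊆ {p | c' ≤ iprod p v' ∧ iprod p v' ≤ c' + (D * Real.sin α + t * Real.cos α)} := by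
  simp only [iprod] at huv hQS ⊢
  set b := ⟪u', v⟫
  have hcos : ⟪u', u⟫ = Real.cos α := by
    rw [← hangle, real_inner_comm, inner_eq_cos_angle_of_norm_eq_one hu hu']
  have hsin : Real.sin α = |b| :=
    hangle ▸ sin_angle_eq_abs_inner_of_orthonormal finrank_euclideanSpace_fin hu hv huv hu'
  have hcos_nonneg : 0 ≤ Real.cos α :=
    Real.cos_nonneg_of_mem_Icc ⟨by linarith [hα.1, Real.pi_pos], hα.2⟩
  have hv' : ‖Real.cos α • v - b • u‖ = 1 :=
    norm_smul_sub_smul_eq_one hu hv huv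
      (by rw [← sq_abs b, ← hsin, Real.cos_sq_add_sin_sq])
  have hu'v' : ⟪u', Real.cos α • v - b • u⟫ = 0 := by
    rw [inner_sub_right, real_inner_smul_right, real_inner_smul_right, hcos]; ring
  have hdiam {p q : Pt} (hp : p ∈ Q) (hq : q ∈ Q) : |⟪p - q, u⟫| ≤ D :=
    calc |⟪p - q, u⟫| ≤ ‖p - q‖ * ‖u‖ := abs_real_inner_le_norm _ _
      _ ≤ D := by rw [hu, mul_one, ← dist_eq_norm, ← hD]; exact dist_le_diam_of_mem hQbdd hp hq
  obtain ⟨c', hc'⟩ := exists_forall_mem_Icc_of_sub_le hQne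
    (f := fun p => ⟪p, Real.cos α • v - b • u⟫) (W := D * Real.sin α + t * Real.cos α)
    fun p hp q hq => by
      rw [← inner_sub_left, hsin, add_comm, mul_comm D, mul_comm t]
      refine inner_smul_sub_smul_le hcos_nonneg ?_ (hdiam hp hq)
      rw [inner_sub_left]; linarith [(hQS hp).2, (hQS hq).1]
  exact ⟨_, c', hv', hu'v', hc'⟩

/-- A nonempty bounded set of diameter `D` contained in a strip of width `t`
with direction `u` is contained, for any unit vector `u'` making angle `α ∈ [0, π/2]` with
`u`, in a strip with direction `u'` of width at most `D·sin α + t·cos α`. -/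
theorem statement8 (Q : Set Pt) (hQne : Q.Nonempty) (hQbdd : Bornology.IsBounded Q)
    (D : ℝ) (hD : Metric.diam Q = D) (t : ℝ) (ht : 0 ≤ t)
    (u : Pt) (hu : ‖u‖ = 1)
    (v : Pt) (c : ℝ) (hv : ‖v‖ = 1) (huv : iprod u v = 0)
    (hQS : Q ⊆ {p | c ≤ iprod p v ∧ iprod p v ≤ c + t})
    (u' : Pt) (hu' : ‖u'‖ = 1)
    (α : ℝ) (hα : α ∈ Set.Icc 0 (Real.pi / 2))
    (hangle : InnerProductGeometry.angle u u' = α) :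
    ∃ (v' : Pt) (c' : ℝ), ‖v'‖ = 1 ∧ iprod u' v' = 0 ∧
      Q ⊆ {p | c' ≤ iprod p v' ∧ iprod p v' ≤ c' + (D * Real.sin α + t * Real.cos α)} :=
  statement8_general Q hQne hQbdd D hD t u hu v c hv huv hQS u' hu' α hα hangle
end
end

section
/- Let P ⊆ ℝ² be a finite set with no three points collinear, and let a, b, c, d ∈ P be four distinct points in convex position occurring in counterclockwise order a, b, c, d. Suppose the line ℓ_ab through a and b and the line ℓ_cd through c and d are not parallel, meeting at a point v, and that a and b lie on a common closed ray R₁ emanating from v along ℓ_ab while c and d lie on a common closed ray R₂ emanating from v along ℓ_cd. Let W = conv(R₁ ∪ R₂) be the wedge determined by a, b, c, d, and let Q be the set of points of P lying strictly to the left of the directed line from a to b. Then the interior of W contains no point of P if and only if ℓ_cd supports conv(Q) (i.e., Q lies in one closed half-plane bounded by ℓ_cd) and ℓ_cd separates the segment ab from Q (i.e., the segment ab and Q lie in opposite closed half-planes bounded by ℓ_cd). -/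
/-!
The wedge is the intersection of the closed half-planes to the left of the directed lines `ab`
and `cd`: writing `p = v + s • u₁ + t • u₂` by Cramer's rule, the orientation tests `cross a b p`
and `cross c d p` are fixed positive multiples of `t` and `s`. Its interior is therefore the
intersection of the open half-planes, so `P` misses it exactly when all of `Q` lies weakly to the
right of `cd`. The other conditions then come for free: `c ∈ Q` lies on `ℓ_cd`, and `a`, `b`
lie strictly to the left of `cd`.
-/


open Set Metric

noncomputable section

/-- The signed cross product (orientation test): positive iff `q` is strictly to the left of
the directed line from `o` to `p`. -/
def cross (o p q : Pt) : ℝ := (p 0 - o 0) * (q 1 - o 1) - (p 1 - o 1) * (q 0 - o 0)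

def det (u : Pt) : StrongDual ℝ Pt :=
  u 0 • EuclideanSpace.proj (1 : Fin 2) - u 1 • EuclideanSpace.proj (0 : Fin 2)

@[simp]
lemma det_apply (u w : Pt) : det u w = u 0 * w 1 - u 1 * w 0 := by
  simp [det]

lemma det_ne_zero {u : Pt} (hu : u ≠ 0) : det u ≠ 0 := by
  intro h
  apply hu
  ext i
  fin_cases i
  · simpa using congrArg (fun f : StrongDual ℝ Pt => f (EuclideanSpace.single 1 1)) h
  · simpa using congrArg (fun f : StrongDual ℝ Pt => f (EuclideanSpace.single 0 1)) h

lemma cross_eq_det_sub (o q p : Pt) : cross o q p = det (q - o) p - det (q - o) o := by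
  simp only [cross, det_apply, PiLp.sub_apply]
  ring

lemma cross_cyclic (o p q : Pt) : cross o p q = cross p q o := by
  simp only [cross]
  ring

lemma ne_of_cross_pos {o q p : Pt} (h : 0 < cross o q p) : o ≠ q := by
  rintro rfl
  simp [cross] at h

lemma interior_setOf_le_apply {E : Type*} [AddCommGroup E] [TopologicalSpace E]
    [ContinuousAdd E] [Module ℝ E] [ContinuousSMul ℝ E] {ℓ : StrongDual ℝ E} (hℓ : ℓ ≠ 0)
    (c : ℝ) : interior {p | c ≤ ℓ p} = {p | c < ℓ p} := by
  change interior (ℓ ⁻¹' Ici c) = ℓ ⁻¹' Ioi c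
  rw [← (ℓ.isOpenMap_of_ne_zero hℓ).preimage_interior_eq_interior_preimage ℓ.continuous,
    interior_Ici]

lemma setOf_cross_nonneg (o q : Pt) :
    {p | 0 ≤ cross o q p} = {p | det (q - o) o ≤ det (q - o) p} := by
  simp only [cross_eq_det_sub, sub_nonneg]

lemma convex_setOf_cross_nonneg (o q : Pt) : Convex ℝ {p | 0 ≤ cross o q p} := by
  rw [setOf_cross_nonneg]
  exact convex_halfSpace_ge (det (q - o)).toLinearMap.isLinear _

lemma interior_setOf_cross_nonneg {o q : Pt} (h : o ≠ q) :
    interior {p | 0 ≤ cross o q p} = {p | 0 < cross o q p} := by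
  rw [setOf_cross_nonneg, interior_setOf_le_apply (det_ne_zero (sub_ne_zero.2 h.symm))]
  simp only [cross_eq_det_sub, sub_pos]

lemma cross_add_smul_add_smul (v u w : Pt) (α β s t : ℝ) :
    cross (v + α • u) (v + β • u) (v + s • u + t • w) = t * ((β - α) * det u w) := by
  simp only [cross, det_apply, PiLp.add_apply, PiLp.smul_apply, smul_eq_mul]
  ring

lemma det_smul_eq_add (u w x : Pt) : det u w • x = det x w • u + det u x • w := by
  ext i
  fin_cases i <;>
  · simp only [Fin.zero_eta, Fin.mk_one, det_apply, PiLp.add_apply, PiLp.smul_apply, smul_eq_mul]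
    ring

lemma exists_eq_add_smul_add_smul (v : Pt) {u w : Pt} (h : det u w ≠ 0) (p : Pt) :
    ∃ s t : ℝ, p = v + s • u + t • w := by
  refine ⟨(det u w)⁻¹ * det (p - v) w, (det u w)⁻¹ * det u (p - v), ?_⟩
  rw [add_assoc, eq_comm, ← eq_sub_iff_add_eq', mul_smul, mul_smul, ← smul_add, ← det_smul_eq_add,
    inv_smul_smul₀ h]

lemma add_smul_add_smul_mem_convexHull (v u w : Pt) {s t : ℝ} (hs : 0 ≤ s) (ht : 0 ≤ t) :
    v + s • u + t • w ∈ convexHull ℝ (ray v u ∪ ray v w) := by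
  have hu : v + (2 * s) • u ∈ ray v u ∪ ray v w := .inl ⟨2 * s, by positivity, rfl⟩
  have hw : v + (2 * t) • w ∈ ray v u ∪ ray v w := .inr ⟨2 * t, by positivity, rfl⟩
  refine segment_subset_convexHull hu hw ⟨1 / 2, 1 / 2, by norm_num, by norm_num, by norm_num, ?_⟩
  module

theorem convexHull_ray_union_ray_eq {v u₁ u₂ a b c d : Pt}
    (hR₁ : a ∈ ray v u₁ ∧ b ∈ ray v u₁) (hR₂ : c ∈ ray v u₂ ∧ d ∈ ray v u₂)
    (habc : 0 < cross a b c) (hcda : 0 < cross c d a) :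
    convexHull ℝ (ray v u₁ ∪ ray v u₂) = {p | 0 ≤ cross a b p} ∩ {p | 0 ≤ cross c d p} := by
  obtain ⟨⟨ta, hta, rfl⟩, ⟨tb, -, rfl⟩⟩ := hR₁
  obtain ⟨⟨sc, hsc, rfl⟩, ⟨sd, -, rfl⟩⟩ := hR₂
  set k₁ := (tb - ta) * det u₁ u₂
  set k₂ := (sd - sc) * det u₂ u₁
  have hab (s t : ℝ) : cross (v + ta • u₁) (v + tb • u₁) (v + s • u₁ + t • u₂) = t * k₁ :=
    cross_add_smul_add_smul ..
  have hcd (s t : ℝ) : cross (v + sc • u₂) (v + sd • u₂) (v + s • u₁ + t • u₂) = s * k₂ := by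
    rw [add_right_comm]
    exact cross_add_smul_add_smul ..
  have on_ray₁ (r : ℝ) : v + r • u₁ = v + r • u₁ + (0 : ℝ) • u₂ := by simp
  have on_ray₂ (r : ℝ) : v + r • u₂ = v + (0 : ℝ) • u₁ + r • u₂ := by simp
  have hk₁ : 0 < k₁ := by
    rw [on_ray₂, hab] at habc
    exact pos_of_mul_pos_right habc hsc
  have hk₂ : 0 < k₂ := by
    rw [on_ray₁, hcd] at hcda
    exact pos_of_mul_pos_right hcda hta
  apply Subset.antisymm
  · refine convexHull_min ?_
      ((convex_setOf_cross_nonneg _ _).inter (convex_setOf_cross_nonneg _ _))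
    rintro p (⟨r, hr, rfl⟩ | ⟨r, hr, rfl⟩)
    · rw [on_ray₁ r]
      constructor
      · simp only [mem_ofPred_eq, hab, zero_mul, le_refl]
      · simpa only [mem_ofPred_eq, hcd] using mul_nonneg hr hk₂.le
    · rw [on_ray₂ r]
      constructor
      · simpa only [mem_ofPred_eq, hab] using mul_nonneg hr hk₁.le
      · simp only [mem_ofPred_eq, hcd, zero_mul, le_refl]
  · rintro p ⟨hp₁, hp₂⟩
    obtain ⟨s, t, rfl⟩ := exists_eq_add_smul_add_smul v (right_ne_zero_of_mul hk₁.ne') p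
    rw [mem_ofPred_eq, hab] at hp₁
    rw [mem_ofPred_eq, hcd] at hp₂
    exact add_smul_add_smul_mem_convexHull v u₁ u₂ (nonneg_of_mul_nonneg_left hp₂ hk₂)
      (nonneg_of_mul_nonneg_left hp₁ hk₁)

theorem interior_convexHull_ray_union_ray {v u₁ u₂ a b c d : Pt}
    (hR₁ : a ∈ ray v u₁ ∧ b ∈ ray v u₁) (hR₂ : c ∈ ray v u₂ ∧ d ∈ ray v u₂)
    (habc : 0 < cross a b c) (hcda : 0 < cross c d a) :
    interior (convexHull ℝ (ray v u₁ ∪ ray v u₂)) =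
      {p | 0 < cross a b p} ∩ {p | 0 < cross c d p} := by
  rw [convexHull_ray_union_ray_eq hR₁ hR₂ habc hcda, interior_inter,
    interior_setOf_cross_nonneg (ne_of_cross_pos habc),
    interior_setOf_cross_nonneg (ne_of_cross_pos hcda)]

theorem statement9_general (P : Set Pt)
    (a b c d : Pt) (hc : c ∈ P)
    (hccw : 0 < cross a b c ∧ 0 < cross b c d ∧ 0 < cross c d a ∧ 0 < cross d a b)
    (v : Pt) (u₁ u₂ : Pt)
    (hR₁ : a ∈ ray v u₁ ∧ b ∈ ray v u₁) (hR₂ : c ∈ ray v u₂ ∧ d ∈ ray v u₂)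
    (W : Set Pt) (hW : W = convexHull ℝ (ray v u₁ ∪ ray v u₂))
    (Q : Set Pt) (hQ : Q = {p ∈ P | 0 < cross a b p}) :
    P ∩ interior W = ∅ ↔
      ((lineThrough c (d - c) ∩ convexHull ℝ Q).Nonempty ∧
        ((∀ z ∈ Q, 0 ≤ cross c d z) ∨ (∀ z ∈ Q, cross c d z ≤ 0)) ∧
        (((∀ z ∈ Q, 0 ≤ cross c d z) ∧ ∀ z ∈ segment ℝ a b, cross c d z ≤ 0) ∨
         ((∀ z ∈ Q, cross c d z ≤ 0) ∧ ∀ z ∈ segment ℝ a b, 0 ≤ cross c d z))) := by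
  obtain ⟨habc, hbcd, hcda, -⟩ := hccw
  have hcdb : 0 < cross c d b := cross_cyclic b c d ▸ hbcd
  have hempty : P ∩ interior W = ∅ ↔ ∀ z ∈ Q, cross c d z ≤ 0 := by
    rw [hW, interior_convexHull_ray_union_ray hR₁ hR₂ habc hcda, hQ]
    simp only [eq_empty_iff_forall_notMem, mem_inter_iff, mem_ofPred_eq, not_and, not_lt, and_imp]
  have hcQ : c ∈ Q := hQ ▸ ⟨hc, habc⟩
  have hseg : ∀ z ∈ segment ℝ a b, 0 ≤ cross c d z := fun z hz ↦
    (convex_setOf_cross_nonneg c d).segment_subset hcda.le hcdb.le hz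
  rw [hempty]
  constructor
  · intro h
    exact ⟨⟨c, ⟨0, by simp⟩, subset_convexHull ℝ Q hcQ⟩, .inr h, .inr ⟨h, hseg⟩⟩
  · rintro ⟨-, -, ⟨-, hab_le⟩ | ⟨h, -⟩⟩
    · exact absurd (hab_le a (left_mem_segment ℝ a b)) hcda.not_ge
    · exact h

/-- Characterization of empty wedges: the interior of the wedge
`W = conv(R₁ ∪ R₂)` determined by `a, b, c, d` contains no point of `P` if and only if
the line through `c, d` supports `conv(Q)` and separates the segment `ab` from `Q`,
where `Q` is the set of points of `P` strictly to the left of the directed line `ab`. -/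
theorem statement9 (P : Set Pt) (hPfin : P.Finite)
    (hgen : ∀ x ∈ P, ∀ y ∈ P, ∀ z ∈ P, x ≠ y → x ≠ z → y ≠ z →
      ¬ Collinear ℝ ({x, y, z} : Set Pt))
    (a b c d : Pt) (ha : a ∈ P) (hb : b ∈ P) (hc : c ∈ P) (hd : d ∈ P)
    (hab : a ≠ b) (hac : a ≠ c) (had : a ≠ d) (hbc : b ≠ c) (hbd : b ≠ d) (hcd : c ≠ d)
    (hccw : 0 < cross a b c ∧ 0 < cross b c d ∧ 0 < cross c d a ∧ 0 < cross d a b)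
    (v : Pt) (hv₁ : v ∈ lineThrough a (b - a)) (hv₂ : v ∈ lineThrough c (d - c))
    (hnpar : ¬ ∃ r : ℝ, d - c = r • (b - a))
    (u₁ u₂ : Pt) (hu₁ : u₁ ≠ 0) (hu₂ : u₂ ≠ 0)
    (hR₁ : a ∈ ray v u₁ ∧ b ∈ ray v u₁) (hR₂ : c ∈ ray v u₂ ∧ d ∈ ray v u₂)
    (W : Set Pt) (hW : W = convexHull ℝ (ray v u₁ ∪ ray v u₂))
    (Q : Set Pt) (hQ : Q = {p ∈ P | 0 < cross a b p}) :
    P ∩ interior W = ∅ ↔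
      ((lineThrough c (d - c) ∩ convexHull ℝ Q).Nonempty ∧
        ((∀ z ∈ Q, 0 ≤ cross c d z) ∨ (∀ z ∈ Q, cross c d z ≤ 0)) ∧
        (((∀ z ∈ Q, 0 ≤ cross c d z) ∧ ∀ z ∈ segment ℝ a b, cross c d z ≤ 0) ∨
         ((∀ z ∈ Q, cross c d z ≤ 0) ∧ ∀ z ∈ segment ℝ a b, 0 ≤ cross c d z))) :=
  statement9_general P a b c d hc hccw v u₁ u₂ hR₁ hR₂ W hW Q hQ
end
end

section
/- For three non-collinear points a, b, c ∈ ℝ², the minimum width of a strip containing {a, b, c} equals the smallest of the three heights of the triangle abc, i.e., it equals min{dist(a, line(b,c)), dist(b, line(a,c)), dist(c, line(a,b))}. -/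
open Set Metric

noncomputable section

/-!
Project onto the unit normal `v` of a strip of width `w` containing the triangle. Some vertex `p`
projects between the other two, `q` and `r`, so the projections of `q - p` and `r - p` have opposite
signs and differ by at most `w`. Expanding the area form in the orthonormal frame `(v, J v)` then gives
`|ω (q - p) (r - p)| ≤ w * max ‖q - p‖ ‖r - p‖`, i.e. the height onto the longer of the two sides
through `p` is at most `w`. Conversely, the line through two vertices and its parallel through the
third bound a strip whose width is the height from the third vertex.
-/

open Module RealInnerProductSpace

theorem abs_sub_eq_abs_add_abs_of_mul_nonpos {a b : ℝ} (h : a * b ≤ 0) :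
    |a - b| = |a| + |b| := by
  rw [sub_eq_add_neg, ← abs_neg b, abs_add_eq_add_abs_iff, neg_nonneg, neg_nonpos]
  exact mul_nonpos_iff.mp h

section TwoDim

variable {E : Type*} [NormedAddCommGroup E] [InnerProductSpace ℝ E] [Fact (finrank ℝ E = 2)]
  (o : Orientation ℝ E (Fin 2))

local notation "ω" => o.areaForm

theorem Orientation.abs_areaForm_le_of_inner_mul_nonpos {v : E} (hv : ‖v‖ = 1) (x y : E)
    (hxy : ⟪x, v⟫ * ⟪y, v⟫ ≤ 0) : |ω x y| ≤ |⟪x, v⟫ - ⟪y, v⟫| * max ‖x‖ ‖y‖ := by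
  have hexp : ω x y = ⟪x, v⟫ * ω v y - ω v x * ⟪y, v⟫ := by
    rw [← one_mul (ω x y), ← one_pow 2, ← hv, ← o.inner_mul_areaForm_sub,
      real_inner_comm x v, real_inner_comm y v]
  have hvx : |ω v x| ≤ ‖x‖ := by simpa [hv] using o.abs_areaForm_le v x
  have hvy : |ω v y| ≤ ‖y‖ := by simpa [hv] using o.abs_areaForm_le v y
  calc |ω x y| ≤ |⟪x, v⟫| * |ω v y| + |ω v x| * |⟪y, v⟫| := by
        rw [hexp, ← abs_mul, ← abs_mul]; exact abs_sub _ _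
    _ ≤ |⟪x, v⟫| * max ‖x‖ ‖y‖ + max ‖x‖ ‖y‖ * |⟪y, v⟫| := by
        gcongr
        exacts [hvy.trans (le_max_right _ _), hvx.trans (le_max_left _ _)]
    _ = |⟪x, v⟫ - ⟪y, v⟫| * max ‖x‖ ‖y‖ := by
        rw [abs_sub_eq_abs_add_abs_of_mul_nonpos hxy]; ring

end TwoDim

instance : Fact (finrank ℝ Pt = 2) := ⟨finrank_euclideanSpace_fin⟩

theorem lineThrough_sub_comm (q r : Pt) : lineThrough q (r - q) = lineThrough r (q - r) := by
  ext z
  constructor <;> rintro ⟨t, rfl⟩ <;> refine ⟨1 - t, ?_⟩ <;> module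

theorem isStrip_between {n : Pt} (hn : ‖n‖ = 1) (α β : ℝ) :
    IsStrip {z | min α β ≤ iprod z n ∧ iprod z n ≤ max α β} |α - β| := by
  refine ⟨abs_nonneg _, n, min α β, hn, ?_⟩
  rw [← max_sub_min_eq_abs', add_sub_cancel]

section Oriented

variable (o : Orientation ℝ Pt (Fin 2))

local notation "ω" => o.areaForm

theorem Orientation.infDist_lineThrough (p q : Pt) {u : Pt} (hu : u ≠ 0) :
    infDist p (lineThrough q u) = |ω u (p - q)| / ‖u‖ := by
  have hu' : 0 < ‖u‖ := norm_pos_iff.mpr hu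
  have hω : ∀ t : ℝ, ω u (p - (q + t • u)) = ω u (p - q) := fun t => by
    rw [sub_add_eq_sub_sub, map_sub, map_smul, o.areaForm_apply_self, smul_zero, sub_zero]
  apply le_antisymm
  · set t := ⟪u, p - q⟫ / ‖u‖ ^ 2 with ht
    have horth : ⟪u, p - (q + t • u)⟫ = 0 := by
      rw [sub_add_eq_sub_sub, inner_sub_right, real_inner_smul_right, real_inner_self_eq_norm_sq,
        ht, div_mul_cancel₀ _ (pow_ne_zero 2 hu'.ne'), sub_self]
    calc infDist p (lineThrough q u) ≤ dist p (q + t • u) := infDist_le_dist_of_mem ⟨t, rfl⟩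
      _ = |ω u (p - q)| / ‖u‖ := by
        rw [← hω t, o.abs_areaForm_of_orthogonal horth, dist_eq_norm]
        field_simp
  · refine (le_infDist (s := lineThrough q u) ⟨q, 0, by simp⟩).mpr ?_
    rintro _ ⟨t, rfl⟩
    rw [div_le_iff₀ hu', ← hω t, dist_eq_norm, mul_comm]
    exact o.abs_areaForm_le _ _

end Oriented

def stdOrientation : Orientation ℝ Pt (Fin 2) :=
  (EuclideanSpace.basisFun (Fin 2) ℝ).toBasis.orientation

theorem exists_isStrip_infDist_lineThrough (p : Pt) {q r : Pt} (hqr : q ≠ r) :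
    ∃ S, IsStrip S (infDist p (lineThrough q (r - q))) ∧ p ∈ S ∧ q ∈ S ∧ r ∈ S := by
  set o := stdOrientation
  set u := r - q
  have hu : u ≠ 0 := sub_ne_zero.mpr hqr.symm
  set n := ‖u‖⁻¹ • o.rightAngleRotation u
  have hn : ‖n‖ = 1 := by
    rw [norm_smul, LinearIsometryEquiv.norm_map, norm_inv, norm_norm,
      inv_mul_cancel₀ (norm_ne_zero_iff.mpr hu)]
  have hproj : ∀ z, iprod z n = ‖u‖⁻¹ * o.areaForm u z := fun z => by
    rw [iprod, real_inner_smul_right, real_inner_comm, o.inner_rightAngleRotation_left]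
  have hr : iprod r n = iprod q n := by
    rw [hproj, hproj, ← sub_eq_zero, ← mul_sub, ← map_sub, o.areaForm_apply_self, mul_zero]
  have hwidth : infDist p (lineThrough q u) = |iprod p n - iprod q n| := by
    rw [o.infDist_lineThrough p q hu, hproj, hproj, ← mul_sub, ← map_sub, abs_mul, abs_inv,
      abs_norm, inv_mul_eq_div]
  rw [hwidth]
  refine ⟨_, isStrip_between hn _ _, ⟨min_le_left _ _, le_max_left _ _⟩,
    ⟨min_le_right _ _, le_max_right _ _⟩, ?_⟩
  rw [mem_ofPred_eq, hr]
  exact ⟨min_le_right _ _, le_max_right _ _⟩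

theorem min_infDist_lineThrough_le_of_between {p q r v : Pt} (hv : ‖v‖ = 1) (hq : q ≠ p)
    (hr : r ≠ p) {w : ℝ} (hw : |iprod q v - iprod r v| ≤ w)
    (hp : (iprod q v - iprod p v) * (iprod r v - iprod p v) ≤ 0) :
    min (infDist q (lineThrough p (r - p))) (infDist r (lineThrough p (q - p))) ≤ w := by
  set o := stdOrientation
  have hx : q - p ≠ 0 := sub_ne_zero.mpr hq
  have hy : r - p ≠ 0 := sub_ne_zero.mpr hr
  have harea : |o.areaForm (q - p) (r - p)| ≤ w * max ‖q - p‖ ‖r - p‖ := by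
    simp only [iprod, ← inner_sub_left] at hw hp
    refine (o.abs_areaForm_le_of_inner_mul_nonpos hv _ _ hp).trans ?_
    rw [← inner_sub_left, sub_sub_sub_cancel_right]
    gcongr
  rw [o.infDist_lineThrough _ _ hx, o.infDist_lineThrough _ _ hy, o.areaForm_swap (r - p), abs_neg]
  rcases le_total ‖q - p‖ ‖r - p‖ with hle | hle
  · rw [max_eq_right hle] at harea
    exact (min_le_left _ _).trans ((div_le_iff₀ (norm_pos_iff.mpr hy)).mpr harea)
  · rw [max_eq_left hle] at harea
    exact (min_le_right _ _).trans ((div_le_iff₀ (norm_pos_iff.mpr hx)).mpr harea)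

theorem sub_mul_sub_nonpos_of_three (x y z : ℝ) :
    (y - x) * (z - x) ≤ 0 ∨ (x - y) * (z - y) ≤ 0 ∨ (x - z) * (y - z) ≤ 0 := by
  rcases le_total x y with h1 | h1 <;> rcases le_total y z with h2 | h2 <;>
    rcases le_total x z with h3 | h3 <;>
    first
      | (left; nlinarith)
      | (right; left; nlinarith)
      | (right; right; nlinarith)

def minHeight (a b c : Pt) : ℝ :=
  min (infDist a (lineThrough b (c - b)))
    (min (infDist b (lineThrough a (c - a))) (infDist c (lineThrough a (b - a))))

theorem exists_isStrip_minHeight {a b c : Pt} (hab : a ≠ b) (hac : a ≠ c) (hbc : b ≠ c) :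
    ∃ S, IsStrip S (minHeight a b c) ∧ ({a, b, c} : Set Pt) ⊆ S := by
  simp only [insert_subset_iff, singleton_subset_iff]
  let P (w : ℝ) : Prop := ∃ S, IsStrip S w ∧ a ∈ S ∧ b ∈ S ∧ c ∈ S
  refine min_rec' P (exists_isStrip_infDist_lineThrough a hbc) (min_rec' P ?_ ?_)
  · obtain ⟨S, hS, hb, ha, hc⟩ := exists_isStrip_infDist_lineThrough b hac
    exact ⟨S, hS, ha, hb, hc⟩
  · obtain ⟨S, hS, hc, ha, hb⟩ := exists_isStrip_infDist_lineThrough c hab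
    exact ⟨S, hS, ha, hb, hc⟩

theorem minHeight_le_of_isStrip {a b c : Pt} (hab : a ≠ b) (hac : a ≠ c) (hbc : b ≠ c)
    {S : Set Pt} {w : ℝ} (hS : IsStrip S w) (hsub : ({a, b, c} : Set Pt) ⊆ S) :
    minHeight a b c ≤ w := by
  obtain ⟨-, v, c₀, hv, rfl⟩ := hS
  simp only [insert_subset_iff, singleton_subset_iff, mem_ofPred_eq] at hsub
  obtain ⟨⟨ha₁, ha₂⟩, ⟨hb₁, hb₂⟩, hc₁, hc₂⟩ := hsub
  have hw {s t : ℝ} (hs₁ : c₀ ≤ s) (hs₂ : s ≤ c₀ + w) (ht₁ : c₀ ≤ t) (ht₂ : t ≤ c₀ + w) :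
      |s - t| ≤ w :=
    abs_sub_le_iff.mpr ⟨by linarith, by linarith⟩
  rcases sub_mul_sub_nonpos_of_three (iprod a v) (iprod b v) (iprod c v) with hp | hp | hp
  · exact (min_le_right _ _).trans <|
      min_infDist_lineThrough_le_of_between hv hab.symm hac.symm (hw hb₁ hb₂ hc₁ hc₂) hp
  · have := min_infDist_lineThrough_le_of_between hv hab hbc.symm (hw ha₁ ha₂ hc₁ hc₂) hp
    rw [lineThrough_sub_comm b a] at this
    exact (min_le_min le_rfl (min_le_right _ _)).trans this
  · have := min_infDist_lineThrough_le_of_between hv hac hbc (hw ha₁ ha₂ hb₁ hb₂) hp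
    rw [lineThrough_sub_comm c b, lineThrough_sub_comm c a] at this
    exact (min_le_min le_rfl (min_le_left _ _)).trans this

/-- The minimum width of a strip containing three non-collinear points is
the smallest of the three heights of the triangle they form. -/
theorem statement11 (a b c : Pt) (h : ¬ Collinear ℝ ({a, b, c} : Set Pt)) :
    IsLeast {w : ℝ | ∃ S : Set Pt, IsStrip S w ∧ ({a, b, c} : Set Pt) ⊆ S}
      (min (Metric.infDist a (lineThrough b (c - b)))
        (min (Metric.infDist b (lineThrough a (c - a)))
          (Metric.infDist c (lineThrough a (b - a))))) := by
  have hab := ne₁₂_of_not_collinear h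
  have hac := ne₁₃_of_not_collinear h
  have hbc := ne₂₃_of_not_collinear h
  exact ⟨exists_isStrip_minHeight hab hac hbc,
    fun _ ⟨_, hS, hsub⟩ => minHeight_le_of_isStrip hab hac hbc hS hsub⟩
end
end

section
/- For all real numbers w, d with 0 < w ≤ d and every ε ∈ (0, 1], setting β = arcsin(min{ε·w/(6d), 1}) and γ = β + arcsin(min{1, w/d}), one has γ/β ≤ 1 + 3π/ε. -/
open Set Metric

noncomputable section

/-!
Since `arcsin x ≥ x`, the angle `β` is at least `ε (w/d) / 6`, while Jordan's inequality
`sin (π/2 · x) ≥ x` gives `arcsin (w/d) ≤ π/2 · (w/d) = (3π/ε) · ε (w/d) / 6 ≤ (3π/ε) β`.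
-/

namespace Real

lemma self_le_arcsin {x : ℝ} (hx₀ : 0 ≤ x) (hx₁ : x ≤ 1) : x ≤ arcsin x := by
  have := one_le_pi_div_two
  rw [le_arcsin_iff_sin_le ⟨by linarith, by linarith⟩ ⟨by linarith, hx₁⟩]
  exact sin_le hx₀

lemma arcsin_le_pi_div_two_mul {x : ℝ} (hx₀ : 0 ≤ x) (hx₁ : x ≤ 1) : arcsin x ≤ π / 2 * x := by
  have := pi_div_two_pos
  rw [arcsin_le_iff_le_sin ⟨by linarith, hx₁⟩ ⟨by nlinarith, by nlinarith⟩]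
  exact le_sin_mul hx₀ hx₁

end Real

/-- For `0 < w ≤ d` and `ε ∈ (0, 1]`, with
`β = arcsin(min(εw/(6d), 1))` and `γ = β + arcsin(min(1, w/d))`, one has
`γ/β ≤ 1 + 3π/ε`. -/
theorem statement13 (w d ε : ℝ) (hw : 0 < w) (hwd : w ≤ d)
    (hε : ε ∈ Set.Ioc (0 : ℝ) 1)
    (β γ : ℝ)
    (hβ : β = Real.arcsin (min (ε * w / (6 * d)) 1))
    (hγ : γ = β + Real.arcsin (min 1 (w / d))) :
    γ / β ≤ 1 + 3 * Real.pi / ε := by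
  obtain ⟨hε₀, hε₁⟩ := hε
  have hd : 0 < d := hw.trans_le hwd
  set r := w / d with hr
  have hr₀ : 0 < r := div_pos hw hd
  have hr₁ : r ≤ 1 := (div_le_one hd).2 hwd
  have hs : ε * w / (6 * d) = ε * r / 6 := by rw [hr]; field_simp
  have hs₀ : 0 < ε * r / 6 := by positivity
  have hs₁ : ε * r / 6 ≤ 1 := by nlinarith
  rw [hs, min_eq_left hs₁] at hβ
  rw [min_eq_right hr₁] at hγ
  have hβ_ge : ε * r / 6 ≤ β := hβ ▸ Real.self_le_arcsin hs₀.le hs₁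
  have hβ₀ : 0 < β := hs₀.trans_le hβ_ge
  have hα : Real.arcsin r ≤ 3 * Real.pi / ε * β :=
    calc Real.arcsin r ≤ Real.pi / 2 * r := Real.arcsin_le_pi_div_two_mul hr₀.le hr₁
      _ = 3 * Real.pi / ε * (ε * r / 6) := by field_simp; ring
      _ ≤ 3 * Real.pi / ε * β := by gcongr
  rw [hγ, add_div, div_self hβ₀.ne', add_le_add_iff_left, div_le_iff₀ hβ₀]
  exact hα
end
end
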